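/- For coprime integers a, b with 1 ≤ a ≤ b, the boundary coefficients of P_{a/b} are binomial coefficients: A_{0,j} = C(a−1, j−b) for every j ≥ 0; A_{i,0} = C(b−1, i−a) for every i ≥ 0; and whenever i + j = a + b − 1 with i, j ≥ 0, A_{i,j} = C(a+b−1, i). -/
import Mathlib


open MvPolynomial

/-- Specification of the Markov numerator polynomials `P a b` (for coprime `a ≤ b`),
defined by the base cases `P 0 1 = 1`, `P 1 1 = u + v`, `P 1 2 = (u+v)^2 + u*w`
and the Farey-parent recursion
`P (a/b) = (u+v+w) * P (p1/q1) * P (p2/q2) - u^p1 * v^q1 * w^(p1+q1) * P ((p2-p1)/(q2-q1))`,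
where `p1/q1` and `p2/q2` are the Farey parents of `a/b`, ordered so that `q1 < q2`.
Here the variables are `u = X 0`, `v = X 1`, `w = X 2`. -/
structure MarkovNumerator (P : ℕ → ℕ → MvPolynomial (Fin 3) ℤ) : Prop where
  base01 : P 0 1 = 1
  base11 : P 1 1 = X 0 + X 1
  base12 : P 1 2 = (X 0 + X 1) ^ 2 + X 0 * X 2
  farey : ∀ a b p1 q1 p2 q2 : ℕ, 1 ≤ a → a < b → 3 ≤ b → Nat.Coprime a b →
    p1 + p2 = a → q1 + q2 = b → q1 < q2 →
    ((p1 : ℤ) * q2 - (p2 : ℤ) * q1 = 1 ∨ (p2 : ℤ) * q1 - (p1 : ℤ) * q2 = 1) →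
    P a b = (X 0 + X 1 + X 2) * P p1 q1 * P p2 q2
      - X 0 ^ p1 * X 1 ^ q1 * X 2 ^ (p1 + q1) * P (p2 - p1) (q2 - q1)


/-- `markovCoeff P a b i j` is the coefficient `A_{i,j}` of the monomial
`u^i * v^j * w^(a+b-1-i-j)` in the Markov numerator `P a b`. -/
noncomputable def markovCoeff (P : ℕ → ℕ → MvPolynomial (Fin 3) ℤ) (a b i j : ℕ) : ℤ :=
  MvPolynomial.coeff
    (Finsupp.single 0 i + Finsupp.single 1 j + Finsupp.single 2 (a + b - 1 - i - j)) (P a b)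

/-- `zchoose n k` is the binomial coefficient `C(n,k)` for integer arguments,
equal to `0` unless `0 ≤ k ≤ n`. -/
def zchoose (n k : ℤ) : ℤ := if 0 ≤ k ∧ k ≤ n then n.toNat.choose k.toNat else 0


set_option maxHeartbeats 1000000

noncomputable def gz (s : Fin 3) : Fin 3 → MvPolynomial (Fin 3) ℤ :=
  fun i => if i = s then 0 else X i

lemma coeff_aeval_gz (s : Fin 3) (p : MvPolynomial (Fin 3) ℤ) :
    ∀ d : Fin 3 →₀ ℕ, d s = 0 → coeff d (aeval (gz s) p) = coeff d p := by
  induction p using MvPolynomial.induction_on with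
  | C a => intro d _; rw [aeval_C, algebraMap_eq]
  | add p q hp hq => intro d hd; rw [map_add, coeff_add, coeff_add, hp d hd, hq d hd]
  | mul_X p i hp =>
    intro d hd
    rw [map_mul, aeval_X]
    show coeff d (_ * if i = s then (0 : MvPolynomial (Fin 3) ℤ) else X i) = _
    by_cases his : i = s
    · subst his
      rw [if_pos rfl, mul_zero, coeff_zero, coeff_mul_X', if_neg]
      simp [Finsupp.mem_support_iff, hd]
    · rw [if_neg his, coeff_mul_X', coeff_mul_X']
      split
      · exact hp _ (by simp [Finsupp.tsub_apply, Finsupp.single_apply, Ne.symm his, hd])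
      · rfl

lemma coeff_xpow_mul_addpow (s t : Fin 3) (hst : s ≠ t) (c n i j : ℕ) :
    coeff (Finsupp.single s i + Finsupp.single t j)
      ((X s : MvPolynomial (Fin 3) ℤ) ^ c * (X s + X t) ^ n)
      = if c ≤ i ∧ i - c + j = n then ((n.choose (i - c) : ℤ)) else 0 := by
  have hts : t ≠ s := Ne.symm hst
  have expand : ∀ m : ℕ, (X s : MvPolynomial (Fin 3) ℤ) ^ c *
        (X s ^ m * X t ^ (n - m) * ((n.choose m : ℕ) : MvPolynomial (Fin 3) ℤ))
      = monomial (Finsupp.single s (c + m) + Finsupp.single t (n - m)) ((n.choose m : ℤ)) := by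
    intro m
    have hcast : ((n.choose m : ℕ) : MvPolynomial (Fin 3) ℤ)
        = monomial 0 ((n.choose m : ℤ)) := by
      rw [← C_apply]; push_cast; rfl
    rw [X_pow_eq_monomial, X_pow_eq_monomial, X_pow_eq_monomial, hcast,
      monomial_mul, monomial_mul, monomial_mul]
    congr 1
    · rw [add_zero, ← add_assoc, ← Finsupp.single_add]
    · ring
  rw [add_pow, Finset.mul_sum]
  simp only [expand]
  rw [coeff_sum]
  simp only [coeff_monomial]
  by_cases h : c ≤ i ∧ i - c + j = n
  · rw [if_pos h]
    rw [Finset.sum_eq_single (i - c)]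
    · have ceq : (Finsupp.single s (c + (i - c)) + Finsupp.single t (n - (i - c)))
          = (Finsupp.single s i + Finsupp.single t j) := by
        have h1 : c + (i - c) = i := by omega
        have h2 : n - (i - c) = j := by omega
        rw [h1, h2]
      rw [if_pos ceq]
    · intro m hm hne
      rw [if_neg]
      intro heq
      have hs := DFunLike.congr_fun heq s
      simp [Finsupp.single_apply, hst, hts] at hs
      omega
    · intro hmem
      exact absurd (Finset.mem_range.mpr (by omega)) hmem
  · rw [if_neg h]
    apply Finset.sum_eq_zero
    intro m hm
    rw [if_neg]
    intro heq
    have hs := DFunLike.congr_fun heq s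
    have ht := DFunLike.congr_fun heq t
    simp [Finsupp.single_apply, hst, hts] at hs ht
    have := Finset.mem_range.mp hm
    omega


lemma farey_exists (a b : ℕ) (ha : 1 ≤ a) (hab : a < b) (hb : 3 ≤ b) (hcop : Nat.Coprime a b) :
    ∃ p1 q1 p2 q2 : ℕ,
      p1 + p2 = a ∧ q1 + q2 = b ∧ 1 ≤ q1 ∧ q1 < q2 ∧
      ((p1 : ℤ) * q2 - (p2 : ℤ) * q1 = 1 ∨ (p2 : ℤ) * q1 - (p1 : ℤ) * q2 = 1) ∧
      p1 ≤ p2 ∧ p1 ≤ q1 ∧ p2 ≤ q2 ∧ p2 - p1 ≤ q2 - q1 ∧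
      Nat.Coprime p1 q1 ∧ Nat.Coprime p2 q2 ∧ Nat.Coprime (p2 - p1) (q2 - q1) := by
  obtain ⟨x, y, hxy⟩ := Nat.isCoprime_iff_coprime.mpr hcop
  have hbz : (0:ℤ) < b := by exact_mod_cast Nat.lt_of_lt_of_le (by norm_num) hb
  have haz : (1:ℤ) ≤ a := by exact_mod_cast ha
  have habz : (a:ℤ) < b := by exact_mod_cast hab
  have hbn3 : (3:ℤ) ≤ b := by exact_mod_cast hb
  set q' : ℤ := x % b with hq'
  have hq0 : 0 ≤ q' := Int.emod_nonneg x hbz.ne'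
  have hqb : q' < b := Int.emod_lt_of_pos x hbz
  have hdvd : (b:ℤ) ∣ (a * q' - 1) := by
    have h1 : (a:ℤ) * q' - 1 = a * x - 1 - b * (a * (x / b)) := by
      rw [hq', Int.emod_def]; ring
    have h2 : (a:ℤ) * x - 1 = -(y * b) := by linarith [hxy]
    exact ⟨-y - a * (x / b), by rw [h1, h2]; ring⟩
  obtain ⟨k, hk⟩ := hdvd
  have hqne : q' ≠ 0 := by
    intro h0
    rw [h0, mul_zero] at hk
    have hdd : (b:ℤ) ∣ 1 := ⟨-k, by linarith⟩
    have := Int.le_of_dvd one_pos hdd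
    omega
  have hq1 : 1 ≤ q' := by omega
  have hk0 : 0 ≤ k := by
    nlinarith [mul_nonneg (show (0:ℤ) ≤ a by linarith) (show (0:ℤ) ≤ q' - 1 by linarith)]
  obtain ⟨q, hqc⟩ : ∃ n : ℕ, (n:ℤ) = q' := ⟨q'.toNat, Int.toNat_of_nonneg hq0⟩
  obtain ⟨p, hpc⟩ : ∃ n : ℕ, (n:ℤ) = k := ⟨k.toNat, Int.toNat_of_nonneg hk0⟩
  have hdet : (a:ℤ) * q - b * p = 1 := by rw [hqc, hpc]; linarith
  have hq1n : (1:ℤ) ≤ q := by rw [hqc]; exact hq1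
  have hqbn : (q:ℤ) < b := by rw [hqc]; exact hqb
  have hpq : (p:ℤ) < q := by
    have h1 : (b:ℤ) * p < b * q := by
      nlinarith [mul_nonneg (show (0:ℤ) ≤ (b:ℤ) - a by linarith) (show (0:ℤ) ≤ (q:ℤ) by linarith)]
    exact lt_of_mul_lt_mul_left h1 (le_of_lt hbz)
  have hpa : (p:ℤ) < a := by
    have h1 : (b:ℤ) * p < b * a := by
      nlinarith [mul_nonneg (show (0:ℤ) ≤ (a:ℤ) by linarith) (show (0:ℤ) ≤ (b:ℤ) - q by linarith)]
    exact lt_of_mul_lt_mul_left h1 (le_of_lt hbz)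
  have hp0 : (0:ℤ) ≤ p := by positivity
  have key : (a:ℤ) - p ≤ b - q := by
    by_contra hcon
    push_neg at hcon
    have h1 : (b:ℤ) - q + 1 ≤ a - p := by linarith
    nlinarith [mul_nonneg (show (0:ℤ) ≤ (a:ℤ) - p - (b - q + 1) by linarith)
        (show (0:ℤ) ≤ (q:ℤ) by linarith),
      mul_nonneg (show (0:ℤ) ≤ (q:ℤ) - 1 - p by linarith)
        (show (0:ℤ) ≤ (b:ℤ) - q by linarith)]
  have hne2 : 2 * q ≠ b := by
    intro h
    have hb2 : (b:ℤ) = 2 * q := by exact_mod_cast h.symm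
    have hmul : (q:ℤ) * ((a:ℤ) - 2 * p) = 1 := by linear_combination hdet + (p:ℤ) * hb2
    have hqone : (q:ℤ) = 1 := by
      rcases le_or_gt ((a:ℤ) - 2*p) 0 with h' | h'
      · have h2 : (q:ℤ) * ((a:ℤ) - 2 * p) ≤ 0 :=
          mul_nonpos_of_nonneg_of_nonpos (by linarith) h'
        linarith
      · have h2 : (q:ℤ) ≤ (q:ℤ) * ((a:ℤ) - 2 * p) :=
          le_mul_of_one_le_right (by linarith) (by linarith)
        linarith
    omega
  rcases Nat.lt_or_ge q (b - q) with hlt | hge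
  · -- q < b - q : take p1 = p, q1 = q, p2 = a - p, q2 = b - q
    have hltz : 2 * (q:ℤ) + 1 ≤ b := by omega
    have c1 : ((a - p : ℕ) : ℤ) = a - p := by omega
    have c2 : ((b - q : ℕ) : ℤ) = b - q := by omega
    have hple : (p:ℤ) ≤ (a:ℤ) - p := by
      by_contra hcon
      push_neg at hcon
      nlinarith [mul_nonneg (show (0:ℤ) ≤ (p:ℤ) - 1 - ((a:ℤ) - p) by linarith)
          (show (0:ℤ) ≤ (q:ℤ) by linarith),
        mul_nonneg hp0 (show (0:ℤ) ≤ (b:ℤ) - 2*q by linarith)]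
    have hchild : (a:ℤ) - 2*p ≤ (b:ℤ) - 2*q := by
      by_contra hcon
      push_neg at hcon
      nlinarith [mul_nonneg (show (0:ℤ) ≤ (a:ℤ) - 2*p - ((b:ℤ) - 2*q + 1) by linarith)
          (show (0:ℤ) ≤ (q:ℤ) by linarith),
        mul_nonneg (show (0:ℤ) ≤ (q:ℤ) - p - 1 by linarith)
          (show (0:ℤ) ≤ (b:ℤ) - 2*q by linarith)]
    refine ⟨p, q, a - p, b - q, by omega, by omega, by omega, by omega, ?_, by omega, by omega,
      by omega, by omega, ?_, ?_, ?_⟩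
    · right; rw [c1, c2]; linear_combination hdet
    · exact Nat.isCoprime_iff_coprime.mp ⟨-(b:ℤ), (a:ℤ), by linear_combination hdet⟩
    · refine Nat.isCoprime_iff_coprime.mp ⟨(q:ℤ), -(p:ℤ), ?_⟩
      rw [c1, c2]; linear_combination hdet
    · refine Nat.isCoprime_iff_coprime.mp ⟨(q:ℤ), -(p:ℤ), ?_⟩
      have d1 : ((a - p - p : ℕ) : ℤ) = a - 2*p := by omega
      have d2 : ((b - q - q : ℕ) : ℤ) = b - 2*q := by omega
      rw [d1, d2]; linear_combination hdet
  · -- b - q < q : take p1 = a - p, q1 = b - q, p2 = p, q2 = q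
    have hgt : b - q < q := by omega
    have hgtz : (b:ℤ) ≤ 2 * q - 1 := by omega
    have c1 : ((a - p : ℕ) : ℤ) = a - p := by omega
    have c2 : ((b - q : ℕ) : ℤ) = b - q := by omega
    have hple : (a:ℤ) - p ≤ (p:ℤ) := by
      by_contra hcon
      push_neg at hcon
      nlinarith [mul_nonneg (show (0:ℤ) ≤ (a:ℤ) - p - (p + 1) by linarith)
          (show (0:ℤ) ≤ (q:ℤ) by linarith),
        mul_nonneg hp0 (show (0:ℤ) ≤ (q:ℤ) - 1 - ((b:ℤ) - q) by linarith)]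
    have hchild : 2*(p:ℤ) - a ≤ 2*(q:ℤ) - b := by
      by_contra hcon
      push_neg at hcon
      nlinarith [mul_nonneg (show (0:ℤ) ≤ 2*(p:ℤ) - a - (2*(q:ℤ) - b + 1) by linarith)
          (show (0:ℤ) ≤ (b:ℤ) - q by linarith),
        mul_nonneg (show (0:ℤ) ≤ (b:ℤ) - q - ((a:ℤ) - p) by linarith)
          (show (0:ℤ) ≤ 2*(q:ℤ) - b by linarith)]
    refine ⟨a - p, b - q, p, q, by omega, by omega, by omega, by omega, ?_, by omega, by omega,
      by omega, by omega, ?_, ?_, ?_⟩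
    · left; rw [c1, c2]; linear_combination hdet
    · refine Nat.isCoprime_iff_coprime.mp ⟨(q:ℤ), -(p:ℤ), ?_⟩
      rw [c1, c2]; linear_combination hdet
    · exact Nat.isCoprime_iff_coprime.mp ⟨-(b:ℤ), (a:ℤ), by linear_combination hdet⟩
    · refine Nat.isCoprime_iff_coprime.mp ⟨-((b:ℤ)-(q:ℤ)), (a:ℤ)-(p:ℤ), ?_⟩
      have d1 : ((p - (a - p) : ℕ) : ℤ) = 2*p - a := by omega
      have d2 : ((q - (b - q) : ℕ) : ℤ) = 2*q - b := by omega
      rw [d1, d2]; linear_combination hdet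

lemma eval_three (P : ℕ → ℕ → MvPolynomial (Fin 3) ℤ) (hP : MarkovNumerator P) :
    ∀ b a : ℕ, a ≤ b → Nat.Coprime a b → 1 ≤ b →
      aeval (gz 2) (P a b) = (X 0 + X 1) ^ (a + b - 1) ∧
      aeval (gz 1) (P a b) = X 0 ^ a * (X 0 + X 2) ^ (b - 1) ∧
      aeval (gz 0) (P a b) =
        (if a = 0 then 1 else X 1 ^ b * (X 1 + X 2) ^ (a - 1)) := by
  intro b
  induction b using Nat.strong_induction_on with
  | _ b ih =>
  intro a hab hcop hb1
  by_cases hb3 : b < 3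
  · interval_cases b
    · -- b = 1
      interval_cases a
      · rw [hP.base01]; refine ⟨by simp, by simp, by simp⟩
      · rw [hP.base11]
        refine ⟨by simp [gz], by simp [gz], by simp [gz]⟩
    · -- b = 2
      have ha1 : a = 1 := by interval_cases a <;> revert hcop <;> decide
      subst ha1
      rw [hP.base12]
      refine ⟨by simp [gz], ?_, by simp [gz]⟩
      · simp [gz]; ring
  · push_neg at hb3
    have ha0 : a ≠ 0 := by
      rintro rfl
      rw [Nat.coprime_zero_left] at hcop
      omega
    have haltb : a < b := by
      rcases Nat.lt_or_ge a b with h | h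
      · exact h
      · exfalso
        have heq : a = b := le_antisymm hab h
        subst heq
        have h1 : a = 1 := by simpa [Nat.Coprime] using hcop
        omega
    obtain ⟨p1, q1, p2, q2, hsum, hqsum, hq1ge, hqlt, hdet, hp12, hp1q1, hp2q2, hpd, hc1, hc2, hc3⟩ :=
      farey_exists a b (by omega) haltb hb3 hcop
    have hrec := hP.farey a b p1 q1 p2 q2 (by omega) haltb hb3 hcop hsum hqsum hqlt hdet
    have hq2ge : 1 ≤ q2 := by omega
    obtain ⟨e1w, e1v, e1u⟩ := ih q1 (by omega) p1 hp1q1 hc1 hq1ge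
    obtain ⟨e2w, e2v, e2u⟩ := ih q2 (by omega) p2 hp2q2 hc2 hq2ge
    obtain ⟨e3w, e3v, e3u⟩ := ih (q2 - q1) (by omega) (p2 - p1) hpd hc3 (by omega)
    refine ⟨?_, ?_, ?_⟩
    · -- w := 0
      rw [hrec]
      simp only [map_sub, map_mul, map_add, map_pow, aeval_X]
      rw [e1w, e2w]
      have hz : gz 2 2 = 0 := by simp [gz]
      have h0 : gz 2 0 = X 0 := by simp [gz]
      have h1 : gz 2 1 = X 1 := by simp [gz]
      rw [hz, h0, h1, zero_pow (by omega : p1 + q1 ≠ 0)]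
      obtain ⟨m1, hm1⟩ : ∃ m, p1 + q1 - 1 = m := ⟨_, rfl⟩
      obtain ⟨m2, hm2⟩ : ∃ m, p2 + q2 - 1 = m := ⟨_, rfl⟩
      have hab1 : a + b - 1 = m1 + m2 + 1 := by omega
      rw [hm1, hm2, hab1]
      ring
    · -- v := 0
      rw [hrec]
      simp only [map_sub, map_mul, map_add, map_pow, aeval_X]
      rw [e1v, e2v]
      have hz : gz 1 1 = 0 := by simp [gz]
      have h0 : gz 1 0 = X 0 := by simp [gz]
      have h2 : gz 1 2 = X 2 := by simp [gz]
      rw [hz, h0, h2, zero_pow (by omega : q1 ≠ 0)]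
      obtain ⟨m1, hm1⟩ : ∃ m, q1 - 1 = m := ⟨_, rfl⟩
      obtain ⟨m2, hm2⟩ : ∃ m, q2 - 1 = m := ⟨_, rfl⟩
      have hab1 : b - 1 = m1 + m2 + 1 := by omega
      have hasum : a = p1 + p2 := hsum.symm
      rw [hm1, hm2, hab1, hasum]
      ring
    · -- u := 0
      rw [hrec]
      simp only [map_sub, map_mul, map_add, map_pow, aeval_X]
      rw [e1u, e2u, e3u]
      have hz : gz 0 0 = 0 := by simp [gz]
      have h1 : gz 0 1 = X 1 := by simp [gz]
      have h2 : gz 0 2 = X 2 := by simp [gz]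
      rw [hz, h1, h2, if_neg ha0]
      by_cases hp1 : p1 = 0
      · -- then p2 = 1, q1 = 1, a = 1
        subst hp1
        have hp2q1 : p2 * q1 = 1 := by
          rcases hdet with h | h
          · exfalso
            have hnn : (0:ℤ) ≤ (p2:ℤ) * q1 := by positivity
            push_cast at h
            linarith
          · have : ((p2 * q1 : ℕ) : ℤ) = 1 := by push_cast at h ⊢; linarith
            exact_mod_cast this
        have hp2 : p2 = 1 := Nat.eq_one_of_mul_eq_one_right hp2q1
        have hq1 : q1 = 1 := Nat.eq_one_of_mul_eq_one_left hp2q1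
        subst hp2; subst hq1
        rw [if_neg (by omega : ¬ (1:ℕ) = 0), if_neg (by omega : ¬ 1 - 0 = 0)]
        have ha1 : a = 1 := by omega
        obtain ⟨m, hm⟩ : ∃ m, q2 = m + 1 := ⟨q2 - 1, by omega⟩
        have hb' : b = m + 2 := by omega
        have h1m : 1 - 1 = 0 := rfl
        rw [ha1, hb', hm]
        norm_num
        ring
      · rw [if_neg hp1, if_neg (by omega : ¬ p2 = 0), zero_pow hp1]
        obtain ⟨m1, hm1⟩ : ∃ m, p1 - 1 = m := ⟨_, rfl⟩
        obtain ⟨m2, hm2⟩ : ∃ m, p2 - 1 = m := ⟨_, rfl⟩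
        have ha1 : a - 1 = m1 + m2 + 1 := by omega
        have hb' : b = q1 + q2 := hqsum.symm
        rw [hm1, hm2, ha1, hb']
        ring

/-- The boundary coefficients of `P_{a/b}` are binomial coefficients:
`A_{0,j} = C(a-1, j-b)`, `A_{i,0} = C(b-1, i-a)`, and `A_{i,j} = C(a+b-1, i)`
whenever `i + j = a+b-1`. -/
theorem markov_numerator_boundary (P : ℕ → ℕ → MvPolynomial (Fin 3) ℤ)
    (hP : MarkovNumerator P) (a b : ℕ) (ha : 1 ≤ a) (hab : a ≤ b)
    (hcop : Nat.Coprime a b) :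
    (∀ j : ℕ, markovCoeff P a b 0 j = zchoose ((a : ℤ) - 1) ((j : ℤ) - b)) ∧
    (∀ i : ℕ, markovCoeff P a b i 0 = zchoose ((b : ℤ) - 1) ((i : ℤ) - a)) ∧
    (∀ i j : ℕ, i + j = a + b - 1 →
      markovCoeff P a b i j = ((a + b - 1).choose i : ℤ)) := by
  have hb1 : 1 ≤ b := le_trans ha hab
  have ha0 : a ≠ 0 := by omega
  obtain ⟨ew, ev, eu⟩ := eval_three P hP b a hab hcop hb1
  refine ⟨?_, ?_, ?_⟩
  · -- A_{0,j} = C(a-1, j-b)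
    intro j
    unfold markovCoeff
    simp only [Nat.sub_zero]
    rw [Finsupp.single_zero, zero_add]
    set K := a + b - 1 - j with hK
    have hd : ((Finsupp.single 1 j + Finsupp.single 2 K : Fin 3 →₀ ℕ)) 0 = 0 := by
      simp [Finsupp.single_apply]
    rw [← coeff_aeval_gz 0 (P a b) _ hd, eu, if_neg ha0,
      coeff_xpow_mul_addpow 1 2 (by decide) b (a - 1) j K]
    unfold zchoose
    by_cases h : b ≤ j ∧ j - b + K = a - 1
    · rw [if_pos h, if_pos (by omega)]
      have e1 : ((a:ℤ) - 1).toNat = a - 1 := by omega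
      have e2 : ((j:ℤ) - b).toNat = j - b := by omega
      rw [e1, e2]
    · rw [if_neg h, if_neg (by omega)]
  · -- A_{i,0} = C(b-1, i-a)
    intro i
    unfold markovCoeff
    simp only [Nat.sub_zero]
    rw [Finsupp.single_zero, add_zero]
    set K := a + b - 1 - i with hK
    have hd : ((Finsupp.single 0 i + Finsupp.single 2 K : Fin 3 →₀ ℕ)) 1 = 0 := by
      simp [Finsupp.single_apply]
    rw [← coeff_aeval_gz 1 (P a b) _ hd, ev,
      coeff_xpow_mul_addpow 0 2 (by decide) a (b - 1) i K]
    unfold zchoose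
    by_cases h : a ≤ i ∧ i - a + K = b - 1
    · rw [if_pos h, if_pos (by omega)]
      have e1 : ((b:ℤ) - 1).toNat = b - 1 := by omega
      have e2 : ((i:ℤ) - a).toNat = i - a := by omega
      rw [e1, e2]
    · rw [if_neg h, if_neg (by omega)]
  · -- top row
    intro i j hij
    unfold markovCoeff
    have hz : a + b - 1 - i - j = 0 := by omega
    rw [hz, Finsupp.single_zero, add_zero]
    have hd : ((Finsupp.single 0 i + Finsupp.single 1 j : Fin 3 →₀ ℕ)) 2 = 0 := by
      simp [Finsupp.single_apply]
    rw [← coeff_aeval_gz 2 (P a b) _ hd, ew,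
      show ((X 0 + X 1 : MvPolynomial (Fin 3) ℤ)) ^ (a + b - 1)
        = (X 0 : MvPolynomial (Fin 3) ℤ) ^ 0 * (X 0 + X 1) ^ (a + b - 1) by
          rw [pow_zero, one_mul],
      coeff_xpow_mul_addpow 0 1 (by decide) 0 (a + b - 1) i j]
    rw [if_pos ⟨Nat.zero_le i, by omega⟩, Nat.sub_zero]
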